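/- Let f: [0,1]² → [0,1] satisfy the Hölder condition |f(x,y) − f(x',y')| ≤ M(|x−x'| + |y−y'|)^α with α ∈ (0,1]. Let ξ_1,...,ξ_n ∈ [0,1] be arbitrary, and let z*: [n] → [k] assign i to the index a such that ξ_i ∈ [(a−1)/k, a/k). Let θ_{ij} = f(ξ_i, ξ_j) for i ≠ j, and let θ̄_{ab} denote the average of θ_{ij} over pairs i ≠ j with z*(i)=a, z*(j)=b. Then (1/n²) Σ_{a,b} Σ_{i≠j: z*(i)=a, z*(j)=b} (θ_{ij} − θ̄_{ab})² ≤ C M² (1/k²)^α for a universal constant C. -/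

import Mathlib

/-!
Inside a block both coordinates of `(ξ i, ξ j)` lie in intervals of length `1/k`, so by the
Hölder condition any two values `θ_{ij}` of the block differ by at most `D = M (2/k)^α`. Each
value is then within `D` of the block mean, and since the blocks partition a subset of the `n²`
pairs, the total squared error is at most `n² D² ≤ 4 M² (1/k²)^α`.
-/

open Finset

theorem sum_card_filter_fiber_prod_le {ι κ : Type*} [Fintype ι] [Fintype κ] [DecidableEq κ]
    (P : ι × ι → Prop) [DecidablePred P] (z : ι → κ) :
    ∑ a : κ, ∑ b : κ, #{p : ι × ι | P p ∧ z p.1 = a ∧ z p.2 = b} ≤ Fintype.card ι ^ 2 :=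
  calc ∑ a : κ, ∑ b : κ, #{p : ι × ι | P p ∧ z p.1 = a ∧ z p.2 = b}
      = #{p : ι × ι | P p} := by
        rw [card_eq_sum_card_fiberwise (f := fun p : ι × ι => (z p.1, z p.2)) (t := univ)
          (fun _ _ => mem_univ _), ← Fintype.sum_prod_type']
        simp only [filter_filter, Prod.ext_iff]
    _ ≤ #(univ : Finset (ι × ι)) := card_filter_le _ _
    _ = Fintype.card ι ^ 2 := by rw [card_univ, Fintype.card_prod, sq]

theorem abs_sub_sum_div_card_le {ι : Type*} {s : Finset ι} {g : ι → ℝ} {D : ℝ}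
    (h : ∀ p ∈ s, ∀ q ∈ s, |g p - g q| ≤ D) {p : ι} (hp : p ∈ s) :
    |g p - (∑ q ∈ s, g q) / #s| ≤ D := by
  have hs : (0 : ℝ) < #s := by exact_mod_cast card_pos.mpr ⟨p, hp⟩
  have hmean : g p - (∑ q ∈ s, g q) / #s = (∑ q ∈ s, (g p - g q)) / #s := by
    rw [sum_sub_distrib, sum_const, nsmul_eq_mul]
    field_simp
  rw [hmean, abs_div, abs_of_pos hs, div_le_iff₀ hs]
  calc |∑ q ∈ s, (g p - g q)| ≤ ∑ q ∈ s, |g p - g q| := abs_sum_le_sum_abs _ _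
    _ ≤ ∑ _q ∈ s, D := sum_le_sum fun q hq => h p hp q hq
    _ = D * #s := by rw [sum_const, nsmul_eq_mul, mul_comm]

theorem sum_sq_sub_sum_div_card_le {ι : Type*} {s : Finset ι} {g : ι → ℝ} {D : ℝ}
    (h : ∀ p ∈ s, ∀ q ∈ s, |g p - g q| ≤ D) :
    ∑ p ∈ s, (g p - (∑ q ∈ s, g q) / #s) ^ 2 ≤ #s * D ^ 2 :=
  calc ∑ p ∈ s, (g p - (∑ q ∈ s, g q) / #s) ^ 2 ≤ ∑ _p ∈ s, D ^ 2 :=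
        sum_le_sum fun _p hp => sq_le_sq' (abs_le.mp (abs_sub_sum_div_card_le h hp)).1
          (abs_le.mp (abs_sub_sum_div_card_le h hp)).2
    _ = #s * D ^ 2 := by rw [sum_const, nsmul_eq_mul]

theorem sum_blocks_sum_sq_sub_mean_le {ι κ : Type*} [Fintype ι] [Fintype κ] [DecidableEq κ]
    (P : ι × ι → Prop) [DecidablePred P] (z : ι → κ) (g : ι × ι → ℝ) {D : ℝ}
    (h : ∀ p q : ι × ι, z p.1 = z q.1 → z p.2 = z q.2 → |g p - g q| ≤ D) :
    ∑ a : κ, ∑ b : κ, ∑ p ∈ {p : ι × ι | P p ∧ z p.1 = a ∧ z p.2 = b},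
        (g p - (∑ q ∈ {q : ι × ι | P q ∧ z q.1 = a ∧ z q.2 = b}, g q) /
          #{q : ι × ι | P q ∧ z q.1 = a ∧ z q.2 = b}) ^ 2
      ≤ Fintype.card ι ^ 2 * D ^ 2 :=
  calc _ ≤ ∑ a : κ, ∑ b : κ, (#{p : ι × ι | P p ∧ z p.1 = a ∧ z p.2 = b} : ℝ) * D ^ 2 := by
        gcongr with a _ b _
        refine sum_sq_sub_sum_div_card_le fun p hp q hq => ?_
        simp only [mem_filter, mem_univ, true_and] at hp hq
        exact h p q (hp.2.1.trans hq.2.1.symm) (hp.2.2.trans hq.2.2.symm)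
    _ ≤ Fintype.card ι ^ 2 * D ^ 2 := by
        simp only [← sum_mul]
        gcongr
        exact_mod_cast sum_card_filter_fiber_prod_le P z

theorem abs_sub_le_of_holder {S : Set ℝ} {f : ℝ → ℝ → ℝ} {M α δ : ℝ} (hM : 0 ≤ M) (hα : 0 ≤ α)
    (hf : ∀ x ∈ S, ∀ y ∈ S, ∀ x' ∈ S, ∀ y' ∈ S,
      |f x y - f x' y'| ≤ M * (|x - x'| + |y - y'|) ^ α)
    {x y x' y' : ℝ} (hx : x ∈ S) (hy : y ∈ S) (hx' : x' ∈ S) (hy' : y' ∈ S)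
    (hxx' : |x - x'| ≤ δ) (hyy' : |y - y'| ≤ δ) :
    |f x y - f x' y'| ≤ M * (2 * δ) ^ α :=
  (hf x hx y hy x' hx' y' hy').trans <| mul_le_mul_of_nonneg_left
    (Real.rpow_le_rpow (by positivity) (by linarith) hα) hM

theorem rpow_two_mul_sq_le {x α : ℝ} (hx : 0 ≤ x) (hα : α ≤ 1) :
    ((2 * x) ^ α) ^ 2 ≤ 4 * (x ^ 2) ^ α := by
  rw [Real.rpow_pow_comm (by positivity), mul_pow, Real.mul_rpow (by norm_num) (by positivity)]
  gcongr
  exact (Real.rpow_le_self_of_one_le (by norm_num) hα).trans_eq (by norm_num)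
/-- Block approximation of a Hölder graphon: partitioning [0,1] into k intervals and
averaging f over the induced blocks incurs squared error at most C·M²·(1/k²)^α. -/
theorem holder_block_approximation :
    ∃ C : ℝ, 0 < C ∧
    ∀ (n k : ℕ) (α M : ℝ) (f : ℝ → ℝ → ℝ) (ξ : Fin n → ℝ) (z : Fin n → Fin k),
      0 < n → 0 < k → k ≤ n → 0 < α → α ≤ 1 → 0 < M →
      (∀ x ∈ Set.Icc (0:ℝ) 1, ∀ y ∈ Set.Icc (0:ℝ) 1, f x y ∈ Set.Icc (0:ℝ) 1) →
      (∀ x ∈ Set.Icc (0:ℝ) 1, ∀ y ∈ Set.Icc (0:ℝ) 1, ∀ x' ∈ Set.Icc (0:ℝ) 1,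
        ∀ y' ∈ Set.Icc (0:ℝ) 1,
        |f x y - f x' y'| ≤ M * (|x - x'| + |y - y'|) ^ α) →
      (∀ i, ξ i ∈ Set.Icc (0:ℝ) 1) →
      (∀ i, ((z i : ℕ) : ℝ) / k ≤ ξ i ∧ ξ i ≤ (((z i : ℕ) : ℝ) + 1) / k) →
      (1 / (n:ℝ)^2) * ∑ a : Fin k, ∑ b : Fin k,
          ∑ p ∈ Finset.univ.filter
              (fun p : Fin n × Fin n => p.1 ≠ p.2 ∧ z p.1 = a ∧ z p.2 = b),
            (f (ξ p.1) (ξ p.2) -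
              (∑ q ∈ Finset.univ.filter
                  (fun q : Fin n × Fin n => q.1 ≠ q.2 ∧ z q.1 = a ∧ z q.2 = b),
                f (ξ q.1) (ξ q.2)) /
                ((Finset.univ.filter
                  (fun q : Fin n × Fin n => q.1 ≠ q.2 ∧ z q.1 = a ∧ z q.2 = b)).card : ℝ))^2
        ≤ C * M^2 * ((1:ℝ) / (k:ℝ)^2) ^ α := by
  refine ⟨4, four_pos, fun n k α M f ξ z hn _ _ hα hα1 hM _ hf hξ hz => ?_⟩
  have hclose : ∀ i j, z i = z j → |ξ i - ξ j| ≤ 1 / k := fun i j hij => by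
    have h := Real.dist_le_of_mem_Icc (hz i) (hij ▸ hz j)
    rwa [Real.dist_eq, add_div, add_sub_cancel_left] at h
  have hblocks := sum_blocks_sum_sq_sub_mean_le (fun p : Fin n × Fin n => p.1 ≠ p.2) z
    (fun p => f (ξ p.1) (ξ p.2)) fun p q h₁ h₂ => abs_sub_le_of_holder hM.le hα.le hf
      (hξ _) (hξ _) (hξ _) (hξ _) (hclose _ _ h₁) (hclose _ _ h₂)
  rw [Fintype.card_fin] at hblocks
  calc _ ≤ 1 / (n : ℝ) ^ 2 * ((n : ℝ) ^ 2 * (M * (2 * (1 / k : ℝ)) ^ α) ^ 2) := by gcongr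
    _ = (M * (2 * (1 / k : ℝ)) ^ α) ^ 2 := by field_simp
    _ ≤ 4 * M ^ 2 * (1 / (k : ℝ) ^ 2) ^ α := by
        rw [mul_pow, ← one_div_pow, mul_assoc, mul_left_comm]
        exact mul_le_mul_of_nonneg_left (rpow_two_mul_sq_le (by positivity) hα1) (sq_nonneg M)
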